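/- arXiv:2508.12652 — 6 statements merged into one kernel-verified Lean document; each statement's English description precedes it below -/
import Mathlib

section
/- Let G be a transitive permutation group that is p-elusive for a prime p, with point stabilizer H. Let X be a transitive permutation group with point stabilizer Y, and suppose X has a normal subgroup N with X/N ≅ G such that |N| is coprime to p and the image of Y under the quotient map X → X/N equals H. Then X is p-elusive. -/
private lemma orderOf_conj'' {G : Type*} [Group G] (g x : G) :
    orderOf (g * x * g⁻¹) = orderOf x := by
  have := orderOf_injective (MulAut.conj g).toMonoidHom (MulAut.conj g).injective x
  simpa using this

/-- If `G = X/N` is `p`-elusive with point stabilizer `H`, `|N|` is coprime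
to `p`, and the image of the point stabilizer `Y` of `X` in `X/N` is `H`, then `X` is
`p`-elusive (every element of order `p` in `X` has a conjugate in `Y`). -/
theorem stmt_1 {X : Type*} [Group X] [Finite X] (p : ℕ) (hp : p.Prime)
    (N : Subgroup X) [N.Normal] (Y : Subgroup X)
    (hcop : Nat.Coprime (Nat.card N) p)
    (H : Subgroup (X ⧸ N)) (hH : Y.map (QuotientGroup.mk' N) = H)
    (hGelusive : ∀ g : X ⧸ N, orderOf g = p → ∃ k : X ⧸ N, k * g * k⁻¹ ∈ H) :
    ∀ x : X, orderOf x = p → ∃ k : X, k * x * k⁻¹ ∈ Y := by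
  have hpfact : Fact p.Prime := ⟨hp⟩
  intro x hx
  set π := QuotientGroup.mk' N with hπ
  have hπsurj : Function.Surjective π := QuotientGroup.mk'_surjective N
  -- image of x has order p
  have hxbar : orderOf (π x) = p := by
    have hdvd : orderOf (π x) ∣ p := hx ▸ orderOf_map_dvd π x
    rcases (Nat.dvd_prime hp).1 hdvd with h1 | h1
    · exfalso
      have hxN : x ∈ N := by
        rwa [orderOf_eq_one_iff, ← MonoidHom.mem_ker, QuotientGroup.ker_mk'] at h1
      have : orderOf (⟨x, hxN⟩ : N) ∣ Nat.card N := orderOf_dvd_natCard _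
      rw [Subgroup.orderOf_mk, hx] at this
      exact hp.one_lt.ne' (Nat.Coprime.eq_one_of_dvd hcop.symm this)
    · exact h1
  obtain ⟨kbar, hkbar⟩ := hGelusive (π x) hxbar
  obtain ⟨k₀, rfl⟩ := hπsurj kbar
  set z := k₀ * x * k₀⁻¹ with hz
  have hπz : π z ∈ H := by simpa [hz] using hkbar
  have hπzorder : orderOf (π z) = p := by
    have h1 : π z = π k₀ * π x * (π k₀)⁻¹ := by simp [hz]
    rw [h1, orderOf_conj'']
    exact hxbar
  -- get y in Y mapping to π z
  rw [← hH] at hπz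
  obtain ⟨y, hyY, hyz⟩ := hπz
  -- w : element of Y of order p mapping into zpowers (π z)
  have hporder_dvd : p ∣ orderOf y := by
    rw [← hπzorder, ← hyz]; exact orderOf_map_dvd π y
  set m := orderOf y with hm
  have hm0 : m ≠ 0 := by
    have : 0 < m := Nat.pos_of_ne_zero (by
      intro h; rw [hm] at h; exact (orderOf_eq_zero_iff.1 h) (isOfFinOrder_of_finite y))
    omega
  set w := y ^ (m / p) with hw
  have hwY : w ∈ Y := Y.pow_mem hyY _
  have hworder : orderOf w = p := by
    rw [hw, orderOf_pow, ← hm, Nat.gcd_eq_right (Nat.div_dvd_of_dvd hporder_dvd),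
      Nat.div_div_self hporder_dvd hm0]
  have hπw : π w ∈ Subgroup.zpowers (π z) := by
    rw [hw, map_pow, hyz]
    exact Subgroup.npow_mem_zpowers _ _
  -- the subgroup T
  set T : Subgroup X := (Subgroup.zpowers (π z)).comap π with hT
  have hNT : N ≤ T := by
    intro n hn
    have : π n = 1 := by rwa [← MonoidHom.mem_ker, QuotientGroup.ker_mk']
    simp [hT, this, Subgroup.one_mem]
  have hzT : z ∈ T := Subgroup.mem_comap.2 (Subgroup.mem_zpowers _)
  have hwT : w ∈ T := Subgroup.mem_comap.2 hπw
  -- card of T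
  have hφ : Nat.card T = p * Nat.card N := by
    have h1 : Nat.card T =
        Nat.card (T ⧸ N.subgroupOf T) * Nat.card (N.subgroupOf T) :=
      Subgroup.card_eq_card_quotient_mul_card_subgroup _
    have h2 : Nat.card (N.subgroupOf T) = Nat.card N :=
      Nat.card_congr (Subgroup.subgroupOfEquivOfLe hNT).toEquiv
    have h3 : Nat.card (T ⧸ N.subgroupOf T) = p := by
      set φ : T →* X ⧸ N := π.comp T.subtype with hφdef
      have hker : φ.ker = N.subgroupOf T := by
        ext t
        rw [MonoidHom.mem_ker, Subgroup.mem_subgroupOf]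
        exact QuotientGroup.eq_one_iff _
      have hrange : φ.range = Subgroup.zpowers (π z) := by
        have : φ.range = T.map π := by
          rw [hφdef, MonoidHom.range_comp, Subgroup.range_subtype]
        rw [this, hT, Subgroup.map_comap_eq_self_of_surjective hπsurj]
      have e1 : T ⧸ N.subgroupOf T ≃ φ.range := by
        rw [← hker]; exact (QuotientGroup.quotientKerEquivRange φ).toEquiv
      rw [Nat.card_congr e1, hrange, Nat.card_zpowers, hπzorder]
    rw [h1, h2, h3]
  have hcardfact : (Nat.card T).factorization p = 1 := by
    have hN0 : Nat.card N ≠ 0 := Nat.card_pos.ne'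
    have hnd : ¬ p ∣ Nat.card N := fun h =>
      hp.one_lt.ne' (Nat.Coprime.eq_one_of_dvd hcop.symm h)
    rw [hφ, Nat.factorization_mul hp.ne_zero hN0]
    simp [Nat.Prime.factorization_self hp, Nat.factorization_eq_zero_of_not_dvd hnd]
  -- Sylow subgroups of T generated by z and w
  set z' : T := ⟨z, hzT⟩ with hz'
  set w' : T := ⟨w, hwT⟩ with hw'
  have hzorder : orderOf z = p := by
    rw [hz, orderOf_conj'']
    exact hx
  have hcz : Nat.card (Subgroup.zpowers z') = p ^ (Nat.card T).factorization p := by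
    rw [hcardfact, pow_one, Nat.card_zpowers, Subgroup.orderOf_mk, hzorder]
  have hcw : Nat.card (Subgroup.zpowers w') = p ^ (Nat.card T).factorization p := by
    rw [hcardfact, pow_one, Nat.card_zpowers, Subgroup.orderOf_mk, hworder]
  set P : Sylow p T := Sylow.ofCard _ hcz with hP
  set Q : Sylow p T := Sylow.ofCard _ hcw with hQ
  obtain ⟨t, ht⟩ := MulAction.exists_smul_eq T P Q
  have hzP : z' ∈ (P : Subgroup T) := Subgroup.mem_zpowers _
  have hconj : t * z' * t⁻¹ ∈ (Q : Subgroup T) := by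
    rw [← ht, Sylow.coe_subgroup_smul]
    have := Subgroup.smul_mem_pointwise_smul z' (MulAut.conj t) (P : Subgroup T) hzP
    simpa using this
  obtain ⟨j, hj⟩ := hconj
  -- translate back to X
  refine ⟨(t : X) * k₀, ?_⟩
  have hcoe : (t : X) * z * (t : X)⁻¹ = w ^ j := by
    have := congrArg (fun a : T => (a : X)) hj
    simpa [hz', hw'] using this.symm
  have : ((t : X) * k₀) * x * ((t : X) * k₀)⁻¹ = (t : X) * z * (t : X)⁻¹ := by
    rw [hz]; group
  rw [this, hcoe]
  exact Y.zpow_mem hwY j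
end

section
/- Let G be a transitive permutation group with point stabilizer H such that some element g ∈ G of prime order p has no conjugate in H. Let X be a transitive permutation group with point stabilizer Y and a normal subgroup N with X/N ≅ G such that the image of Y in X/N is H. If X is p-elusive (every element of order p in X has a conjugate in Y), then the extension X of N by G does not split, i.e., N has no complement in X. -/
/-- If `G = X/N` has an element `g` of prime order `p` with no conjugate in
the stabilizer `H` (the image of `Y`), and `X` is `p`-elusive with stabilizer `Y`, then
the extension `X` of `N` by `G` does not split: `N` has no complement in `X`. -/
theorem stmt_2 {X : Type*} [Group X] [Finite X] (p : ℕ) (hp : p.Prime)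
    (N Y : Subgroup X) [N.Normal]
    (H : Subgroup (X ⧸ N)) (hH : Y.map (QuotientGroup.mk' N) = H)
    (g : X ⧸ N) (hg : orderOf g = p)
    (hgH : ∀ k : X ⧸ N, k * g * k⁻¹ ∉ H)
    (hXelusive : ∀ x : X, orderOf x = p → ∃ k : X, k * x * k⁻¹ ∈ Y) :
    ¬ ∃ C : Subgroup X, Subgroup.IsComplement' N C := by
  rintro ⟨C, hC⟩
  -- find x ∈ C with mk x = g
  obtain ⟨x0, hx0⟩ := QuotientGroup.mk'_surjective N g
  obtain ⟨⟨⟨n, hn⟩, ⟨c, hc⟩⟩, hnc, -⟩ := hC.existsUnique x0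
  have hmkc : (QuotientGroup.mk' N) c = g := by
    rw [← hx0, ← hnc]
    simp only [map_mul]
    rw [show (QuotientGroup.mk' N) n = 1 from (QuotientGroup.eq_one_iff n).mpr hn, one_mul]
  -- order of c is p
  have hcp : c ^ p = 1 := by
    have h1 : (QuotientGroup.mk' N) (c ^ p) = 1 := by
      rw [map_pow, hmkc, ← hg, pow_orderOf_eq_one]
    have h2 : c ^ p ∈ N := by
      rwa [← QuotientGroup.ker_mk' N, MonoidHom.mem_ker]
    have h3 : c ^ p ∈ C := C.pow_mem hc p
    have := hC.disjoint.le_bot ⟨h2, h3⟩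
    simpa using this
  have hcne : c ≠ 1 := by
    intro h
    rw [h, map_one] at hmkc
    rw [← hmkc, orderOf_one] at hg
    exact hp.ne_one hg.symm
  have hord : orderOf c = p := by
    have hd := orderOf_dvd_of_pow_eq_one hcp
    rcases (Nat.Prime.eq_one_or_self_of_dvd hp _ hd) with h | h
    · exact absurd (orderOf_eq_one_iff.mp h) hcne
    · exact h
  obtain ⟨k, hk⟩ := hXelusive c hord
  refine hgH ((QuotientGroup.mk' N) k) ?_
  rw [← hH]
  exact ⟨k * c * k⁻¹, hk, by rw [map_mul, map_mul, map_inv, hmkc]⟩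
end

section
/- Let p be an odd prime and let W be the group with presentation ⟨a,b,c,s | a^p = b^p = c^p = [a,b] = [b,c] = [c,a] = 1, s^p = a, a^s = a, b^s = ab, c^s = a⁻¹b⁻²c⟩. Then W is isomorphic to the group ⟨x,y,z | x^{p²} = y^p = z^p = [y,z] = 1, [x,y] = x^p, [x,z] = y⟩, via the map sending a ↦ x^p, b ↦ x^{p(p−1)/2} y⁻¹, c ↦ z⁻², s ↦ x. -/
/-- The relators of the presentation
`⟨a,b,c,s | a^p = b^p = c^p = [a,b] = [b,c] = [c,a] = 1, s^p = a,
a^s = a, b^s = ab, c^s = a⁻¹b⁻²c⟩`, with generators `a = 0`, `b = 1`, `c = 2`, `s = 3`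
and `[g,h] = g⁻¹h⁻¹gh`, `g^s = s⁻¹gs`. -/
def relsW (p : ℕ) : Set (FreeGroup (Fin 4)) :=
  letI a : FreeGroup (Fin 4) := FreeGroup.of 0
  letI b : FreeGroup (Fin 4) := FreeGroup.of 1
  letI c : FreeGroup (Fin 4) := FreeGroup.of 2
  letI s : FreeGroup (Fin 4) := FreeGroup.of 3
  {a ^ p, b ^ p, c ^ p,
   a⁻¹ * b⁻¹ * a * b, b⁻¹ * c⁻¹ * b * c, c⁻¹ * a⁻¹ * c * a,
   s ^ p * a⁻¹,
   (s⁻¹ * a * s) * a⁻¹,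
   (s⁻¹ * b * s) * (a * b)⁻¹,
   (s⁻¹ * c * s) * (a⁻¹ * b⁻¹ * b⁻¹ * c)⁻¹}

/-- The relators of the presentation
`⟨x,y,z | x^{p²} = y^p = z^p = [y,z] = 1, [x,y] = x^p, [x,z] = y⟩`,
with generators `x = 0`, `y = 1`, `z = 2` and `[g,h] = g⁻¹h⁻¹gh`. -/
def relsB (p : ℕ) : Set (FreeGroup (Fin 3)) :=
  letI x : FreeGroup (Fin 3) := FreeGroup.of 0
  letI y : FreeGroup (Fin 3) := FreeGroup.of 1
  letI z : FreeGroup (Fin 3) := FreeGroup.of 2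
  {x ^ (p ^ 2), y ^ p, z ^ p,
   y⁻¹ * z⁻¹ * y * z,
   (x⁻¹ * y⁻¹ * x * y) * (x ^ p)⁻¹,
   (x⁻¹ * z⁻¹ * x * z) * y⁻¹}

/-! In the second group, `[x,y] = x^p` makes `x^p` commute with `x` and `y`, so the
commutator of `x` and `y` is central in `⟨x,y⟩` and `(xy)^p = x^p y^p x^(-p·p(p-1)/2) = x^p`.
Since `x^z = xy`, this shows that `x^p` also commutes with `z`, and the relations of `W` follow
for `x^p, x^(pk) y⁻¹, z⁻², x` (with `p = 2k+1`). Conversely `s, b⁻¹a^k, c^k` satisfy the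
relations of the second group, and the two induced maps are mutually inverse on generators. -/

theorem mul_sub_one_div_two_eq_mul {p k : ℕ} (hk : p = 2 * k + 1) : p * (p - 1) / 2 = p * k := by
  rw [hk, Nat.add_sub_cancel, mul_left_comm, Nat.mul_div_cancel_left _ two_pos]

section Commutators

variable {G : Type*} [Group G]

theorem pow_two_mul_eq_inv {p k : ℕ} {g : G} (hg : g ^ p = 1) (hk : p = 2 * k + 1) :
    g ^ (2 * k) = g⁻¹ :=
  eq_inv_of_mul_eq_one_left (by rw [← pow_succ, ← hk, hg])

theorem inv_mul_inv_mul_mul_eq_one_iff {a b : G} : a⁻¹ * b⁻¹ * a * b = 1 ↔ Commute a b := by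
  rw [← Commute.inv_inv_iff, ← commutatorElement_eq_one_iff_commute, commutatorElement_def,
    inv_inv, inv_inv]

theorem pow_mul_of_commute_commutator {x y c : G} (hc : y * x = x * y * c) (hcy : Commute c y)
    (n : ℕ) : y ^ n * x = x * y ^ n * c ^ n := by
  induction n with
  | zero => simp
  | succ n ih =>
    calc y ^ (n + 1) * x = y * x * y ^ n * c ^ n := by rw [pow_succ', mul_assoc, ih]; group
      _ = x * y * (c * y ^ n) * c ^ n := by rw [hc]; group
      _ = x * y ^ (n + 1) * c ^ (n + 1) := by rw [(hcy.pow_right n).eq]; group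

theorem mul_pow_of_commute_commutator {x y c : G} (hc : y * x = x * y * c) (hcx : Commute c x)
    (hcy : Commute c y) (n : ℕ) : (x * y) ^ n = x ^ n * y ^ n * c ^ n.choose 2 := by
  induction n with
  | zero => simp
  | succ n ih =>
    calc (x * y) ^ (n + 1) = x ^ n * (y ^ n * x) * y * c ^ n.choose 2 := by
          rw [pow_succ, ih, mul_assoc _ (c ^ _), ((hcx.mul_right hcy).pow_left _).eq]; group
      _ = x ^ (n + 1) * y ^ n * (c ^ n * y) * c ^ n.choose 2 := by
          rw [pow_mul_of_commute_commutator hc hcy]; group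
      _ = x ^ (n + 1) * y ^ (n + 1) * c ^ (n + 1).choose 2 := by
          rw [(hcy.pow_left n).eq, Nat.choose_succ_succ', Nat.choose_one_right]; group

end Commutators

section Relations

variable {G : Type*} [Group G]

structure WRelations (p : ℕ) (a b c s : G) : Prop where
  a_pow : a ^ p = 1
  b_pow : b ^ p = 1
  c_pow : c ^ p = 1
  commute_ab : Commute a b
  commute_bc : Commute b c
  commute_ca : Commute c a
  s_pow : s ^ p = a
  conj_a : s⁻¹ * a * s = a
  conj_b : s⁻¹ * b * s = a * b
  conj_c : s⁻¹ * c * s = a⁻¹ * b⁻¹ * b⁻¹ * c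

structure BRelations (p : ℕ) (x y z : G) : Prop where
  x_pow : x ^ (p ^ 2) = 1
  y_pow : y ^ p = 1
  z_pow : z ^ p = 1
  commute_yz : Commute y z
  comm_xy : x⁻¹ * y⁻¹ * x * y = x ^ p
  comm_xz : x⁻¹ * z⁻¹ * x * z = y

theorem map_relsW_eq_one_iff {p : ℕ} (φ : FreeGroup (Fin 4) →* G) :
    (∀ r ∈ relsW p, φ r = 1) ↔
      WRelations p (φ (.of 0)) (φ (.of 1)) (φ (.of 2)) (φ (.of 3)) := by
  simp only [relsW, Set.forall_mem_insert, Set.mem_singleton_iff, forall_eq, map_mul, map_inv,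
    map_pow, mul_inv_eq_one, inv_mul_inv_mul_mul_eq_one_iff]
  exact ⟨fun h ↦ ⟨h.1, h.2.1, h.2.2.1, h.2.2.2.1, h.2.2.2.2.1, h.2.2.2.2.2.1, h.2.2.2.2.2.2.1,
    h.2.2.2.2.2.2.2.1, h.2.2.2.2.2.2.2.2.1, h.2.2.2.2.2.2.2.2.2⟩,
    fun h ↦ ⟨h.1, h.2, h.3, h.4, h.5, h.6, h.7, h.8, h.9, h.10⟩⟩

theorem map_relsB_eq_one_iff {p : ℕ} (φ : FreeGroup (Fin 3) →* G) :
    (∀ r ∈ relsB p, φ r = 1) ↔ BRelations p (φ (.of 0)) (φ (.of 1)) (φ (.of 2)) := by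
  simp only [relsB, Set.forall_mem_insert, Set.mem_singleton_iff, forall_eq, map_mul, map_inv,
    map_pow, mul_inv_eq_one, inv_mul_inv_mul_mul_eq_one_iff]
  exact ⟨fun h ↦ ⟨h.1, h.2.1, h.2.2.1, h.2.2.2.1, h.2.2.2.2.1, h.2.2.2.2.2⟩,
    fun h ↦ ⟨h.1, h.2, h.3, h.4, h.5, h.6⟩⟩

end Relations

theorem WRelations.of (p : ℕ) :
    WRelations p (.of 0 : PresentedGroup (relsW p)) (.of 1) (.of 2) (.of 3) :=
  (map_relsW_eq_one_iff (PresentedGroup.mk _)).mp fun _ ↦ PresentedGroup.one_of_mem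

theorem BRelations.of (p : ℕ) :
    BRelations p (.of 0 : PresentedGroup (relsB p)) (.of 1) (.of 2) :=
  (map_relsB_eq_one_iff (PresentedGroup.mk _)).mp fun _ ↦ PresentedGroup.one_of_mem

namespace BRelations

variable {G : Type*} [Group G] {p k : ℕ} {x y z : G} (h : BRelations p x y z)
include h

theorem y_mul_x : y * x = x * y * (x ^ p)⁻¹ := by
  rw [← h.comm_xy]; group

theorem commute_pow_y : Commute (x ^ p) y := by
  have hy : SemiconjBy y (x ^ (p + 1)) x := by
    rw [SemiconjBy, pow_succ', ← h.comm_xy]; group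
  have hyp := hy.pow_right p
  rw [← pow_mul, add_one_mul, pow_add, ← sq, h.x_pow, one_mul] at hyp
  exact Commute.symm hyp

theorem mul_y_pow (hk : p = 2 * k + 1) : (x * y) ^ p = x ^ p := by
  have hc : Commute (x ^ p)⁻¹ x := ((Commute.refl x).pow_left p).inv_left
  rw [mul_pow_of_commute_commutator h.y_mul_x hc h.commute_pow_y.inv_left, h.y_pow,
    Nat.choose_two_right, mul_sub_one_div_two_eq_mul hk, inv_pow, ← pow_mul, ← mul_assoc, ← sq,
    pow_mul, h.x_pow, one_pow, inv_one, mul_one, mul_one]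

theorem commute_pow_z (hk : p = 2 * k + 1) : Commute (x ^ p) z := by
  have hz : SemiconjBy z (x * y) x := by
    rw [SemiconjBy, ← h.comm_xz]; group
  have hzp := hz.pow_right p
  rw [h.mul_y_pow hk] at hzp
  exact hzp.symm

theorem conj_y_inv : x⁻¹ * y⁻¹ * x = x ^ p * y⁻¹ := by
  rw [← h.comm_xy]; group

theorem conj_z : x⁻¹ * z * x = z * y⁻¹ := by
  rw [← h.comm_xz]; group

end BRelations

theorem BRelations.wRelations {G : Type*} [Group G] {p k : ℕ} {x y z : G}
    (h : BRelations p x y z) (hk : p = 2 * k + 1) :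
    WRelations p (x ^ p) (x ^ (p * k) * y⁻¹) (z ^ 2)⁻¹ x := by
  have hy : Commute (x ^ (p * k)) y := by rw [pow_mul]; exact h.commute_pow_y.pow_left k
  have hz : Commute (x ^ (p * k)) z := by rw [pow_mul]; exact (h.commute_pow_z hk).pow_left k
  have hb : (x ^ (p * k) * y⁻¹) ^ 2 = y⁻¹ ^ 2 * (x ^ p)⁻¹ := by
    rw [hy.inv_right.eq, hy.inv_right.symm.mul_pow, ← pow_mul, eq_mul_inv_iff_mul_eq, mul_assoc,
      ← pow_add, show p * k * 2 + p = p ^ 2 by rw [sq, hk]; ring, h.x_pow, mul_one]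
  refine
    { a_pow := by rw [← pow_mul, ← sq, h.x_pow]
      b_pow := by
        rw [hy.inv_right.mul_pow, inv_pow, h.y_pow, inv_one, mul_one, ← pow_mul, mul_right_comm,
          ← sq, pow_mul, h.x_pow, one_pow]
      c_pow := by rw [inv_pow, ← pow_mul, mul_comm, pow_mul, h.z_pow, one_pow, inv_one]
      commute_ab := (Commute.pow_pow_self x p (p * k)).mul_right h.commute_pow_y.inv_right
      commute_bc := ((hz.mul_left h.commute_yz.inv_left).pow_right 2).inv_right
      commute_ca := ((h.commute_pow_z hk).pow_right 2).inv_right.symm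
      s_pow := rfl
      conj_a := by group
      conj_b := ?_
      conj_c := ?_ }
  · rw [show x⁻¹ * (x ^ (p * k) * y⁻¹) * x = x ^ (p * k) * (x⁻¹ * y⁻¹ * x) by group,
      h.conj_y_inv, ← mul_assoc, ← mul_assoc, (Commute.pow_pow_self x (p * k) p).eq]
  · calc x⁻¹ * (z ^ 2)⁻¹ * x = ((x⁻¹ * z * x) ^ 2)⁻¹ := by simp only [sq]; group
      _ = (x ^ p)⁻¹ * ((x ^ (p * k) * y⁻¹) ^ 2)⁻¹ * (z ^ 2)⁻¹ := by
        rw [h.conj_z, hb, h.commute_yz.inv_left.symm.mul_pow]; group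
      _ = (x ^ p)⁻¹ * (x ^ (p * k) * y⁻¹)⁻¹ * (x ^ (p * k) * y⁻¹)⁻¹ * (z ^ 2)⁻¹ := by
        simp only [sq, mul_inv_rev, mul_assoc]

theorem WRelations.bRelations {G : Type*} [Group G] {p k : ℕ} {a b c s : G}
    (h : WRelations p a b c s) (hk : p = 2 * k + 1) :
    BRelations p s (b⁻¹ * a ^ k) (c ^ k) := by
  have hc : SemiconjBy s (a⁻¹ * b⁻¹ * b⁻¹ * c) c := by rw [SemiconjBy, ← h.conj_c]; group
  have hac : Commute (a⁻¹ * b⁻¹ * b⁻¹) c :=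
    (h.commute_ca.symm.inv_left.mul_left h.commute_bc.inv_left).mul_left h.commute_bc.inv_left
  have has : Commute (a ^ k) s := by rw [← h.s_pow]; exact (Commute.pow_self s p).pow_left k
  refine
    { x_pow := by rw [sq, pow_mul, h.s_pow, h.a_pow]
      y_pow := by
        rw [(h.commute_ab.symm.pow_right k).inv_left.mul_pow, inv_pow, h.b_pow, inv_one, one_mul,
          ← pow_mul, mul_comm, pow_mul, h.a_pow, one_pow]
      z_pow := by rw [← pow_mul, mul_comm, pow_mul, h.c_pow, one_pow]
      commute_yz := (h.commute_bc.inv_left.mul_left (h.commute_ca.symm.pow_left k)).pow_right k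
      comm_xy := ?_
      comm_xz := ?_ }
  · calc s⁻¹ * (b⁻¹ * a ^ k)⁻¹ * s * (b⁻¹ * a ^ k)
        = (a ^ k)⁻¹ * s⁻¹ * b * s * b⁻¹ * a ^ k := by
          rw [mul_inv_rev, inv_inv, ← mul_assoc s⁻¹, ← has.inv_inv.eq]; group
      _ = s ^ p := by rw [h.s_pow, mul_assoc _ s⁻¹, mul_assoc _ (s⁻¹ * b), h.conj_b]; group
  · calc s⁻¹ * (c ^ k)⁻¹ * s * c ^ k = (s⁻¹ * c ^ k * s)⁻¹ * c ^ k := by group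
      _ = ((a⁻¹ * b⁻¹ * b⁻¹) ^ k)⁻¹ := by
        rw [mul_assoc, ← (hc.pow_right k).eq, inv_mul_cancel_left, hac.mul_pow,
          (hac.pow_pow k k).eq]
        group
      _ = b⁻¹ * a ^ k := by
        rw [show a⁻¹ * b⁻¹ * b⁻¹ = (b ^ 2 * a)⁻¹ by group, inv_pow, inv_inv,
          (h.commute_ab.symm.pow_left 2).mul_pow, ← pow_mul, pow_two_mul_eq_inv h.b_pow hk]

section Lift

variable {G : Type*} [Group G] {p : ℕ}

def WRelations.lift {a b c s : G} (h : WRelations p a b c s) : PresentedGroup (relsW p) →* G :=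
  PresentedGroup.toGroup (f := ![a, b, c, s]) ((map_relsW_eq_one_iff _).mpr (by simpa using h))

def BRelations.lift {x y z : G} (h : BRelations p x y z) : PresentedGroup (relsB p) →* G :=
  PresentedGroup.toGroup (f := ![x, y, z]) ((map_relsB_eq_one_iff _).mpr (by simpa using h))

end Lift

section Isomorphism

variable {p k : ℕ}

def wToB (hk : p = 2 * k + 1) : PresentedGroup (relsW p) →* PresentedGroup (relsB p) :=
  ((BRelations.of p).wRelations hk).lift

def bToW (hk : p = 2 * k + 1) : PresentedGroup (relsB p) →* PresentedGroup (relsW p) :=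
  ((WRelations.of p).bRelations hk).lift

theorem bToW_comp_wToB (hk : p = 2 * k + 1) : (bToW hk).comp (wToB hk) = .id _ := by
  have h := WRelations.of p
  ext i
  fin_cases i <;>
    simp only [wToB, bToW, WRelations.lift, BRelations.lift, MonoidHom.coe_comp,
      Function.comp_apply, MonoidHom.id_apply, PresentedGroup.toGroup.of, Matrix.cons_val_zero,
      Matrix.cons_val_one, Matrix.cons_val, Fin.isValue, Fin.zero_eta, Fin.mk_one,
      Fin.reduceFinMk, map_mul, map_inv, map_pow]
  · exact h.s_pow
  · rw [pow_mul, h.s_pow]; group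
  · rw [← pow_mul, mul_comm, pow_two_mul_eq_inv h.c_pow hk, inv_inv]

theorem wToB_comp_bToW (hk : p = 2 * k + 1) : (wToB hk).comp (bToW hk) = .id _ := by
  have h := BRelations.of p
  ext i
  fin_cases i <;>
    simp only [wToB, bToW, WRelations.lift, BRelations.lift, MonoidHom.coe_comp,
      Function.comp_apply, MonoidHom.id_apply, PresentedGroup.toGroup.of, Matrix.cons_val_zero,
      Matrix.cons_val_one, Matrix.cons_val, Fin.isValue, Fin.zero_eta, Fin.mk_one,
      Fin.reduceFinMk, map_mul, map_inv, map_pow]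
  · rw [← pow_mul]; group
  · rw [inv_pow, ← pow_mul, pow_two_mul_eq_inv h.z_pow hk, inv_inv]

end Isomorphism

theorem stmt_5_general (p : ℕ) (hodd : Odd p) :
    ∃ e : PresentedGroup (relsW p) ≃* PresentedGroup (relsB p),
      e (PresentedGroup.of 0) = (PresentedGroup.of 0 : PresentedGroup (relsB p)) ^ p ∧
      e (PresentedGroup.of 1) =
        (PresentedGroup.of 0 : PresentedGroup (relsB p)) ^ (p * (p - 1) / 2) *
          (PresentedGroup.of 1 : PresentedGroup (relsB p))⁻¹ ∧
      e (PresentedGroup.of 2) =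
        ((PresentedGroup.of 2 : PresentedGroup (relsB p)) ^ 2)⁻¹ ∧
      e (PresentedGroup.of 3) = (PresentedGroup.of 0 : PresentedGroup (relsB p)) := by
  obtain ⟨k, hk⟩ := hodd
  refine ⟨(wToB hk).toMulEquiv (bToW hk) (bToW_comp_wToB hk) (wToB_comp_bToW hk),
    ?_, ?_, ?_, ?_⟩ <;>
    simp [wToB, WRelations.lift, mul_sub_one_div_two_eq_mul hk]

/-- For an odd prime `p`, the group `W` presented by `relsW p` is isomorphic
to the group presented by `relsB p`, via the map `a ↦ x^p`, `b ↦ x^{p(p−1)/2} y⁻¹`,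
`c ↦ z⁻²`, `s ↦ x`. -/
theorem stmt_5 (p : ℕ) (hp : p.Prime) (hodd : Odd p) :
    ∃ e : PresentedGroup (relsW p) ≃* PresentedGroup (relsB p),
      e (PresentedGroup.of 0) = (PresentedGroup.of 0 : PresentedGroup (relsB p)) ^ p ∧
      e (PresentedGroup.of 1) =
        (PresentedGroup.of 0 : PresentedGroup (relsB p)) ^ (p * (p - 1) / 2) *
          (PresentedGroup.of 1 : PresentedGroup (relsB p))⁻¹ ∧
      e (PresentedGroup.of 2) =
        ((PresentedGroup.of 2 : PresentedGroup (relsB p)) ^ 2)⁻¹ ∧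
      e (PresentedGroup.of 3) = (PresentedGroup.of 0 : PresentedGroup (relsB p)) :=
  stmt_5_general p hodd
end

section
/- Let E be a permutation group on a finite set Ω such that: (a) for every v ∈ Ω the point stabilizer E_v is normal in E; and (b) for all u, v ∈ Ω, |E_u| = |E_v| and either E_u = E_v or E = E_u E_v. Then the 2-closure of E contains a derangement of prime order. -/
/-!
Normality of the point stabilizers makes `E_v` constant on `E`-orbits, and equal orders make all
indices `|E : E_v|` equal, so a single prime `p` divides all of them. By Cauchy's theorem each
`E / E_v` has an element `y_v E_v` of order `p`; choosing `y_v` as a function of the subgroup `E_v`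
alone, the map `v ↦ y_v v` is a fixed-point-free permutation of order `p`. It lies in the
2-closure: for a pair `(u, v)` either `E_u = E_v` and `y_u` moves both points correctly, or
`E = E_u E_v` and writing `y_u⁻¹ y_v = a b` with `a ∈ E_u`, `b ∈ E_v`, the element
`y_u a = y_v b⁻¹` does.
-/

open MulAction

theorem Subgroup.exists_pow_mem_notMem_of_prime_dvd_index {G : Type*} [Group G]
    {N : Subgroup G} [N.Normal] [N.FiniteIndex] {p : ℕ} (hp : p.Prime) (hdvd : p ∣ N.index) :
    ∃ y : G, y ^ p ∈ N ∧ y ∉ N := by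
  have := Fact.mk hp
  obtain ⟨q, hq⟩ := exists_prime_orderOf_dvd_card' (G := G ⧸ N) p hdvd
  obtain ⟨y, rfl⟩ := QuotientGroup.mk_surjective q
  refine ⟨y, ?_, fun hy => hp.ne_one ?_⟩
  · rw [← QuotientGroup.eq_one_iff, QuotientGroup.mk_pow, ← hq, pow_orderOf_eq_one]
  · rw [← hq, (QuotientGroup.eq_one_iff y).2 hy, orderOf_one]

theorem Subgroup.index_eq_of_card_eq {G : Type*} [Group G] [Finite G] {H K : Subgroup G}
    (h : Nat.card H = Nat.card K) : H.index = K.index :=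
  Nat.eq_of_mul_eq_mul_left Nat.card_pos <| by
    rw [Subgroup.card_mul_index, h, Subgroup.card_mul_index]

namespace MulAction

variable {G α : Type*} [Group G] [MulAction G α]

theorem map_subtype_stabilizer (H : Subgroup G) (a : α) :
    (stabilizer H a).map H.subtype = H ⊓ stabilizer G a := by
  ext g
  simp [Subgroup.mem_map, mem_stabilizer_iff, Subgroup.mem_inf, and_comm]

theorem exists_stabilizer_ne_top [FaithfulSMul G α] [Nontrivial G] :
    ∃ a : α, stabilizer G a ≠ ⊤ := by
  obtain ⟨g, hg⟩ := exists_ne (1 : G)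
  by_contra! h
  exact hg <| eq_of_smul_eq_smul fun a => by
    rw [one_smul]
    exact mem_stabilizer_iff.1 (h a ▸ Subgroup.mem_top g)

theorem stabilizer_smul_eq_of_normal {a : α} (hN : (stabilizer G a).Normal) (g : G) :
    stabilizer G (g • a) = stabilizer G a := by
  rw [stabilizer_smul_eq_stabilizer_map_conj]
  exact Subgroup.normal_iff_map_conj_eq.1 hN g

section StabilizerwisePerm

variable (hN : ∀ a : α, (stabilizer G a).Normal) (y : Subgroup G → G)

def stabilizerwisePerm : Equiv.Perm α where
  toFun a := y (stabilizer G a) • a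
  invFun a := (y (stabilizer G a))⁻¹ • a
  left_inv a := by simp only [stabilizer_smul_eq_of_normal (hN a), inv_smul_smul]
  right_inv a := by simp only [stabilizer_smul_eq_of_normal (hN a), smul_inv_smul]

theorem stabilizerwisePerm_apply (a : α) :
    stabilizerwisePerm hN y a = y (stabilizer G a) • a := rfl

theorem stabilizerwisePerm_pow_apply (n : ℕ) (a : α) :
    (stabilizerwisePerm hN y ^ n) a = y (stabilizer G a) ^ n • a := by
  induction n generalizing a with
  | zero => simp
  | succ n ih =>
    rw [pow_succ, Equiv.Perm.mul_apply, ih, stabilizerwisePerm_apply,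
      stabilizer_smul_eq_of_normal (hN a), smul_smul, ← pow_succ]

theorem stabilizerwisePerm_pow_eq_one {p : ℕ}
    (h : ∀ a : α, y (stabilizer G a) ^ p ∈ stabilizer G a) :
    stabilizerwisePerm hN y ^ p = 1 :=
  Equiv.ext fun a => by rw [stabilizerwisePerm_pow_apply]; exact h a

theorem exists_smul_eq_stabilizerwisePerm_apply_pair {u v : α}
    (h : stabilizer G u = stabilizer G v ∨ stabilizer G u ⊔ stabilizer G v = ⊤) :
    ∃ e : G, e • u = stabilizerwisePerm hN y u ∧ e • v = stabilizerwisePerm hN y v := by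
  simp only [stabilizerwisePerm_apply]
  rcases h with h | h
  · exact ⟨y (stabilizer G u), rfl, by rw [h]⟩
  · have := hN v
    obtain ⟨a, ha, b, hb, hab⟩ := Subgroup.mem_sup_of_normal_right.1
      (h ▸ Subgroup.mem_top ((y (stabilizer G u))⁻¹ * y (stabilizer G v)))
    refine ⟨y (stabilizer G u) * a, by rw [mul_smul, mem_stabilizer_iff.1 ha], ?_⟩
    have hyv : y (stabilizer G v) = y (stabilizer G u) * (a * b) := by
      rw [hab, mul_inv_cancel_left]
    rw [hyv, ← mul_assoc, mul_smul _ b, mem_stabilizer_iff.1 hb]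

end StabilizerwisePerm

theorem exists_derangement_prime_orderOf [Finite G] [FaithfulSMul G α] [Nontrivial G]
    (hN : ∀ a : α, (stabilizer G a).Normal)
    (hcard : ∀ u v : α, Nat.card (stabilizer G u) = Nat.card (stabilizer G v))
    (hsup : ∀ u v : α,
      stabilizer G u = stabilizer G v ∨ stabilizer G u ⊔ stabilizer G v = ⊤) :
    ∃ σ : Equiv.Perm α, (∀ u v : α, ∃ e : G, e • u = σ u ∧ e • v = σ v) ∧
      (orderOf σ).Prime ∧ ∀ a, σ a ≠ a := by
  obtain ⟨a₀, ha₀⟩ := exists_stabilizer_ne_top (G := G) (α := α)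
  set p := (stabilizer G a₀).index.minFac
  have hp : p.Prime := Nat.minFac_prime (by rwa [Ne, Subgroup.index_eq_one])
  have := Fact.mk hp
  have hwit : ∀ a : α, ∃ y : G, y ^ p ∈ stabilizer G a ∧ y ∉ stabilizer G a := fun a =>
    have := hN a
    Subgroup.exists_pow_mem_notMem_of_prime_dvd_index hp
      (Subgroup.index_eq_of_card_eq (hcard a a₀) ▸ Nat.minFac_dvd _)
  let y (S : Subgroup G) : G := Classical.epsilon fun y => y ^ p ∈ S ∧ y ∉ S
  have hy (a : α) := Classical.epsilon_spec (hwit a)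
  have hfree (a : α) : stabilizerwisePerm hN y a ≠ a := (hy a).2
  refine ⟨stabilizerwisePerm hN y,
    fun u v => exists_smul_eq_stabilizerwisePerm_apply_pair hN y (hsup u v), ?_, hfree⟩
  rw [orderOf_eq_prime (stabilizerwisePerm_pow_eq_one hN y fun a => (hy a).1)
    fun h => hfree a₀ (by rw [h]; rfl)]
  exact hp

end MulAction

/-- Theorem E: Let `E` be a (nontrivial) permutation group on a finite set
`Ω` such that (a) every point stabilizer `E_v` is normal in `E`, and (b) for all
`u, v ∈ Ω`, `|E_u| = |E_v|` and either `E_u = E_v` or `E = E_u E_v`. Then the 2-closure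
of `E` (the permutations preserving the `E`-orbits on `Ω × Ω`) contains a derangement of
prime order. -/
theorem stmt_15 {Ω : Type*} [Finite Ω] (E : Subgroup (Equiv.Perm Ω)) (hE : E ≠ ⊥)
    (Ev : Ω → Subgroup (Equiv.Perm Ω))
    (hEv : ∀ v, Ev v = E ⊓ MulAction.stabilizer (Equiv.Perm Ω) v)
    (ha : ∀ v : Ω, ∀ g ∈ E, ∀ h ∈ Ev v, g * h * g⁻¹ ∈ Ev v)
    (hb : ∀ u v : Ω, Nat.card (Ev u) = Nat.card (Ev v) ∧
      (Ev u = Ev v ∨ ∀ x ∈ E, ∃ a ∈ Ev u, ∃ b ∈ Ev v, x = a * b)) :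
    ∃ g : Equiv.Perm Ω,
      (∀ u v : Ω, ∃ e ∈ E, (e u, e v) = (g u, g v)) ∧
      (orderOf g).Prime ∧ ∀ x : Ω, g x ≠ x := by
  have hstab (v : Ω) : Ev v = (stabilizer E v).map E.subtype :=
    (hEv v).trans (map_subtype_stabilizer E v).symm
  have hmem (v : Ω) (x : E) : (x : Equiv.Perm Ω) ∈ Ev v ↔ x ∈ stabilizer E v := by
    rw [hstab]
    exact Subgroup.mem_map_iff_mem E.subtype_injective
  have hle (v : Ω) : Ev v ≤ E := hEv v ▸ inf_le_left
  have := (Subgroup.nontrivial_iff_ne_bot E).2 hE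
  have hN (v : Ω) : (stabilizer E v).Normal :=
    ⟨fun n hn g => (hmem v _).1 (ha v g g.2 n ((hmem v n).2 hn))⟩
  have hcard (u v : Ω) : Nat.card (stabilizer E u) = Nat.card (stabilizer E v) := by
    have := (hb u v).1
    rwa [hstab, hstab, Subgroup.card_map_of_injective E.subtype_injective,
      Subgroup.card_map_of_injective E.subtype_injective] at this
  have hsup (u v : Ω) :
      stabilizer E u = stabilizer E v ∨ stabilizer E u ⊔ stabilizer E v = ⊤ := by
    refine (hb u v).2.imp (fun h => Subgroup.map_injective E.subtype_injective ?_) fun hprod => ?_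
    · rw [← hstab, ← hstab, h]
    · rw [Subgroup.eq_top_iff']
      intro x
      obtain ⟨a, hau, b, hbv, hxab⟩ := hprod x x.2
      have hxab : x = ⟨a, hle u hau⟩ * ⟨b, hle v hbv⟩ := Subtype.ext hxab
      exact hxab ▸ Subgroup.mul_mem_sup ((hmem u _).1 hau) ((hmem v _).1 hbv)
  obtain ⟨g, hg, hprime, hfree⟩ := exists_derangement_prime_orderOf hN hcard hsup
  refine ⟨g, fun u v => ?_, hprime, hfree⟩
  obtain ⟨e, hu, hv⟩ := hg u v
  exact ⟨e, e.2, Prod.ext hu hv⟩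
end

section
/- Let X = N : G be a split extension that acts as a transitive permutation group with point stabilizer Y, and suppose that the quotient group G = X/N, viewed as a transitive permutation group with point stabilizer YN/N, is well-defined. If X is elusive, then G is elusive. -/
/-- Let `X = N : G` be a split extension acting transitively with point
stabilizer `Y`, and view `G = X/N` as a transitive permutation group with point
stabilizer `YN/N` (the image of `Y`). If `X` is elusive (every element of prime order
has a conjugate in `Y`), then `G` is elusive. -/
theorem stmt_16 {X : Type*} [Group X] [Finite X] (N : Subgroup X) [N.Normal]
    (hsplit : ∃ C : Subgroup X, Subgroup.IsComplement' N C)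
    (Y : Subgroup X)
    (hXelusive : ∀ x : X, (orderOf x).Prime → ∃ k : X, k * x * k⁻¹ ∈ Y) :
    ∀ g : X ⧸ N, (orderOf g).Prime →
      ∃ k : X ⧸ N, k * g * k⁻¹ ∈ Y.map (QuotientGroup.mk' N) := by
  obtain ⟨C, hC⟩ := hsplit
  intro g hg
  obtain ⟨x, rfl⟩ := QuotientGroup.mk_surjective g
  obtain ⟨⟨⟨n, hn⟩, ⟨c, hc⟩⟩, hnc⟩ := hC.existsUnique x
  have hx : (x : X ⧸ N) = (c : X ⧸ N) := by
    rw [← hnc.1]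
    simp only [QuotientGroup.mk_mul]
    rw [(QuotientGroup.eq_one_iff n).mpr hn, one_mul]
  have hord : orderOf ((c : X ⧸ N)) = orderOf c := by
    refine Nat.dvd_antisymm (orderOf_map_dvd (QuotientGroup.mk' N) c) ?_
    apply orderOf_dvd_of_pow_eq_one
    have h1 : ((c ^ orderOf ((c : X ⧸ N)) : X) : X ⧸ N) = 1 := by
      rw [QuotientGroup.mk_pow]
      exact pow_orderOf_eq_one _
    have h2 : c ^ orderOf ((c : X ⧸ N)) ∈ N := (QuotientGroup.eq_one_iff _).mp h1
    have h3 : c ^ orderOf ((c : X ⧸ N)) ∈ C := pow_mem hc _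
    have := hC.disjoint.le_bot ⟨h2, h3⟩
    simpa using this
  have hcprime : (orderOf c).Prime := by
    rw [hx] at hg; rwa [hord] at hg
  obtain ⟨k, hk⟩ := hXelusive c hcprime
  refine ⟨(k : X ⧸ N), ?_⟩
  rw [hx]
  exact ⟨k * c * k⁻¹, hk, by simp⟩
end

section
/- Let G = A₅ act on the fully deleted permutation module U = 𝔽₃⁴ over 𝔽₃ (with basis u₁,…,u₄ and action u_i^x as induced from the natural permutation action of x=(1,2)(3,4), y=(1,3,5) on e₁,…,e₅ modulo the all-ones vector when appropriate). Let M₀ = ⟨u₁u₂, u₂u₃⁻¹, u₃u₄⟩ ≤ U, a subgroup of order 27. Then the union of the images of M₀ under the six group elements 1, (1,4,5), (2,4,5), (3,4,5), (4,2,5), (4,3,5) of A₅ equals all of U; equivalently, every element of U is mapped into M₀ by some element of A₅. -/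
private def g1 : Fin 5 → ZMod 3 := ![1,1,0,0,1]
private def g2 : Fin 5 → ZMod 3 := ![0,1,2,0,0]
private def g3 : Fin 5 → ZMod 3 := ![0,0,1,1,1]

private lemma three0 : (3 : ZMod 3) = 0 := rfl

private def K : Submodule (ZMod 3) (Fin 5 → ZMod 3) where
  carrier := {v | v 0 + v 1 + v 2 + v 3 + v 4 = 0 ∧ v 4 = v 0 + v 3}
  add_mem' := by
    rintro a b ⟨ha1, ha2⟩ ⟨hb1, hb2⟩
    refine ⟨?_, ?_⟩ <;> simp only [Pi.add_apply]
    · linear_combination ha1 + hb1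
    · linear_combination ha2 + hb2
  zero_mem' := by constructor <;> simp
  smul_mem' := by
    rintro c a ⟨ha1, ha2⟩
    refine ⟨?_, ?_⟩ <;> simp only [Pi.smul_apply, smul_eq_mul]
    · linear_combination c * ha1
    · linear_combination c * ha2

private lemma K_le_span : K ≤ Submodule.span (ZMod 3) {g1, g2, g3} := by
  rintro w ⟨h1, h2⟩
  have h3 : w 2 = w 0 - w 1 + w 3 := by
    linear_combination h1 - h2 - (w 0 + w 3) * three0
  have hw : w = w 0 • g1 + (w 1 - w 0) • g2 + w 3 • g3 := by
    funext i
    fin_cases i <;> simp [g1, g2, g3] <;>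
      first
        | rfl
        | linear_combination h2
        | linear_combination h3 + (w 0 - w 1) * three0
        | linear_combination -h3 + (w 1 - w 0) * three0
        | linear_combination h2 + h3 + (w 0 - w 1) * three0
        | linear_combination h2 - h3 + (w 1 - w 0) * three0
  rw [hw]
  refine add_mem (add_mem ?_ ?_) ?_ <;>
    exact Submodule.smul_mem _ _ (Submodule.subset_span (by simp))

private lemma key (a b c d e : ZMod 3) (h : a + b + c + d + e = 0) :
    (e = a + d) ∨ (a = d + e) ∨ (b = a + e) ∨
    (c = a + e) ∨ (d = a + b) ∨ (d = a + c) := by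
  revert h; revert a b c d e; decide

private lemma cover (v : Fin 5 → ZMod 3) (σ : Equiv.Perm (Fin 5))
    (h1 : v 0 + v 1 + v 2 + v 3 + v 4 = 0)
    (h2 : v (σ 4) = v (σ 0) + v (σ 3)) : (v ∘ σ) ∈ K := by
  have hs := Equiv.sum_comp σ v
  rw [Fin.sum_univ_five, Fin.sum_univ_five] at hs
  refine ⟨?_, h2⟩
  show v (σ 0) + v (σ 1) + v (σ 2) + v (σ 3) + v (σ 4) = 0
  rw [hs]; exact h1

/-- Let `A₅` act on the fully deleted permutation module
`U = {v ∈ 𝔽₃⁵ : Σᵢ vᵢ = 0}` (with basis `uᵢ = eᵢ − e₅`) by permuting coordinates, and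
let `M₀ = ⟨u₁+u₂, u₂−u₃, u₃+u₄⟩`, a subgroup of order 27. Then every element of `U` is
mapped into `M₀` by some element of `A₅` (equivalently, the images of `M₀` under the six
group elements `1, (1,4,5), (2,4,5), (3,4,5), (4,2,5), (4,3,5)` cover `U`). -/
theorem stmt_17 :
    ∀ u : Fin 5 → (Fin 5 → ZMod 3),
      u = (fun i => Pi.single i 1 - Pi.single 4 1) →
      ∀ M₀ : Submodule (ZMod 3) (Fin 5 → ZMod 3),
        M₀ = Submodule.span (ZMod 3) {u 0 + u 1, u 1 - u 2, u 2 + u 3} →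
        Nat.card M₀ = 27 ∧
        ∀ v : Fin 5 → ZMod 3, (∑ i, v i) = 0 →
          ∃ σ ∈ alternatingGroup (Fin 5), (v ∘ σ) ∈ M₀ := by
  intro u hu M₀ hM₀
  have hgen : ({u 0 + u 1, u 1 - u 2, u 2 + u 3} : Set (Fin 5 → ZMod 3)) = {g1, g2, g3} := by
    subst hu
    have e1 : (Pi.single 0 1 - Pi.single 4 1 : Fin 5 → ZMod 3) +
        (Pi.single 1 1 - Pi.single 4 1) = g1 := by
      funext i; fin_cases i <;> simp [g1, Pi.single_apply] <;> decide
    have e2 : (Pi.single 1 1 - Pi.single 4 1 : Fin 5 → ZMod 3) -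
        (Pi.single 2 1 - Pi.single 4 1) = g2 := by
      funext i; fin_cases i <;> simp [g2, Pi.single_apply] <;> decide
    have e3 : (Pi.single 2 1 - Pi.single 4 1 : Fin 5 → ZMod 3) +
        (Pi.single 3 1 - Pi.single 4 1) = g3 := by
      funext i; fin_cases i <;> simp [g3, Pi.single_apply] <;> decide
    simp only [e1, e2, e3]
  have hMK : M₀ = K := by
    rw [hM₀, hgen]
    refine le_antisymm (Submodule.span_le.mpr ?_) K_le_span
    rintro x hx
    rcases hx with rfl | rfl | rfl <;> exact ⟨by decide, by decide⟩
  constructor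
  · rw [hMK]
    have : Nat.card K = Nat.card {v : Fin 5 → ZMod 3 //
        v 0 + v 1 + v 2 + v 3 + v 4 = 0 ∧ v 4 = v 0 + v 3} := rfl
    rw [this, Nat.card_eq_fintype_card]
    decide
  · intro v hv
    have hv' : v 0 + v 1 + v 2 + v 3 + v 4 = 0 := by
      rw [Fin.sum_univ_five] at hv; exact hv
    rw [hMK]
    have hswap : ∀ a b : Fin 5, a ≠ b →
        (Equiv.swap a b) ∈ alternatingGroup (Fin 5) → True := fun _ _ _ _ => trivial
    rcases key (v 0) (v 1) (v 2) (v 3) (v 4) hv' with h | h | h | h | h | h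
    · exact ⟨1, one_mem _, ⟨hv', h⟩⟩
    · refine ⟨Equiv.swap 0 3 * Equiv.swap 3 4, ?_, cover v _ hv' ?_⟩
      · rw [Equiv.Perm.mem_alternatingGroup]
        rw [map_mul, Equiv.Perm.sign_swap (by decide), Equiv.Perm.sign_swap (by decide)]
        decide
      · simpa [show ((Equiv.swap 0 3 * Equiv.swap 3 4 : Equiv.Perm (Fin 5)) 4 = 0 ∧
            (Equiv.swap 0 3 * Equiv.swap 3 4 : Equiv.Perm (Fin 5)) 0 = 3 ∧
            (Equiv.swap 0 3 * Equiv.swap 3 4 : Equiv.Perm (Fin 5)) 3 = 4) from by decide]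
          using h
    · refine ⟨Equiv.swap 1 3 * Equiv.swap 3 4, ?_, cover v _ hv' ?_⟩
      · rw [Equiv.Perm.mem_alternatingGroup]
        rw [map_mul, Equiv.Perm.sign_swap (by decide), Equiv.Perm.sign_swap (by decide)]
        decide
      · simpa [show ((Equiv.swap 1 3 * Equiv.swap 3 4 : Equiv.Perm (Fin 5)) 4 = 1 ∧
            (Equiv.swap 1 3 * Equiv.swap 3 4 : Equiv.Perm (Fin 5)) 0 = 0 ∧
            (Equiv.swap 1 3 * Equiv.swap 3 4 : Equiv.Perm (Fin 5)) 3 = 4) from by decide]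
          using h
    · refine ⟨Equiv.swap 2 3 * Equiv.swap 3 4, ?_, cover v _ hv' ?_⟩
      · rw [Equiv.Perm.mem_alternatingGroup]
        rw [map_mul, Equiv.Perm.sign_swap (by decide), Equiv.Perm.sign_swap (by decide)]
        decide
      · simpa [show ((Equiv.swap 2 3 * Equiv.swap 3 4 : Equiv.Perm (Fin 5)) 4 = 2 ∧
            (Equiv.swap 2 3 * Equiv.swap 3 4 : Equiv.Perm (Fin 5)) 0 = 0 ∧
            (Equiv.swap 2 3 * Equiv.swap 3 4 : Equiv.Perm (Fin 5)) 3 = 4) from by decide]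
          using h
    · refine ⟨Equiv.swap 3 1 * Equiv.swap 1 4, ?_, cover v _ hv' ?_⟩
      · rw [Equiv.Perm.mem_alternatingGroup]
        rw [map_mul, Equiv.Perm.sign_swap (by decide), Equiv.Perm.sign_swap (by decide)]
        decide
      · simpa [show ((Equiv.swap 3 1 * Equiv.swap 1 4 : Equiv.Perm (Fin 5)) 4 = 3 ∧
            (Equiv.swap 3 1 * Equiv.swap 1 4 : Equiv.Perm (Fin 5)) 0 = 0 ∧
            (Equiv.swap 3 1 * Equiv.swap 1 4 : Equiv.Perm (Fin 5)) 3 = 1) from by decide]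
          using h
    · refine ⟨Equiv.swap 3 2 * Equiv.swap 2 4, ?_, cover v _ hv' ?_⟩
      · rw [Equiv.Perm.mem_alternatingGroup]
        rw [map_mul, Equiv.Perm.sign_swap (by decide), Equiv.Perm.sign_swap (by decide)]
        decide
      · simpa [show ((Equiv.swap 3 2 * Equiv.swap 2 4 : Equiv.Perm (Fin 5)) 4 = 3 ∧
            (Equiv.swap 3 2 * Equiv.swap 2 4 : Equiv.Perm (Fin 5)) 0 = 0 ∧
            (Equiv.swap 3 2 * Equiv.swap 2 4 : Equiv.Perm (Fin 5)) 3 = 2) from by decide]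
          using h
end
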